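/- Let N be a natural number and let λ, μ be adjacent locations in Δ_N. Then there exists exactly one location ν ∈ Δ_N such that {λ, μ, ν} is a black 3-clique, and there exists at most one location ν ∈ Δ_N such that {λ, μ, ν} is a white 3-clique. -/

import Mathlib

/-- `Δ_N`: the set of triples of natural numbers with sum `N`. -/
def BA.Delta (N : ℕ) : Set (Fin 3 → ℕ) := {v | v 0 + v 1 + v 2 = N}

/-- Adjacency: `u - v = e_i - e_j` (computed in `ℤ³`) for some `i ≠ j`. -/
def BA.Adj (u v : Fin 3 → ℕ) : Prop :=
  ∃ i j : Fin 3, i ≠ j ∧ ∀ k, (u k : ℤ) - (v k : ℤ) =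
    (if k = i then 1 else 0) - (if k = j then 1 else 0)

/-- The black 3-clique attached to `(r,s,t)`. -/
def BA.blackSet (r s t : ℕ) : Set (Fin 3 → ℕ) :=
  {![r + 1, s, t], ![r, s + 1, t], ![r, s, t + 1]}

/-- The white 3-clique attached to `(r,s,t)`. -/
def BA.whiteSet (r s t : ℕ) : Set (Fin 3 → ℕ) :=
  {![r, s + 1, t + 1], ![r + 1, s, t + 1], ![r + 1, s + 1, t]}

/-- `S` is a black 3-clique in `Δ_N`. -/
def BA.IsBlack (N : ℕ) (S : Set (Fin 3 → ℕ)) : Prop :=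
  ∃ r s t : ℕ, r + s + t + 1 = N ∧ S = BA.blackSet r s t

/-- `S` is a white 3-clique in `Δ_N`. -/
def BA.IsWhite (N : ℕ) (S : Set (Fin 3 → ℕ)) : Prop :=
  ∃ r s t : ℕ, r + s + t + 2 = N ∧ S = BA.whiteSet r s t

/-!
A black clique is a translate `{b + e₀, b + e₁, b + e₂}` of the standard triangle and a white
clique a translate `{a - e₀, a - e₁, a - e₂}` of its negative. Any two distinct vertices of a black
clique therefore recover its base `b` as their meet, and any two of a white clique recover its apex
`a` as their join; so an edge lies in at most one clique of each colour, and its third vertex is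
determined. Conversely, the endpoints of an edge `l ~ m` are two vertices of the black clique with
base `l ⊓ m`.
-/

theorem Set.ncard_triple_eq_three_iff {α : Type*} {a b c : α} :
    ({a, b, c} : Set α).ncard = 3 ↔ a ≠ b ∧ a ≠ c ∧ b ≠ c := by
  classical
  rw [← Finset.card_triple_eq_three_iff, ← Set.ncard_coe_finset]
  push_cast
  rfl

theorem Set.eq_of_insert_insert_eq {α : Type*} {l m n n' : α}
    (h : ({l, m, n} : Set α) = {l, m, n'}) (hl : n ≠ l) (hm : n ≠ m) : n = n' := by
  have : n ∈ ({l, m, n'} : Set α) := h ▸ by simp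
  simpa [hl, hm] using this

theorem Set.exists_insert_insert_eq {α : Type*} {a b c l m : α} (hl : l ∈ ({a, b, c} : Set α))
    (hm : m ∈ ({a, b, c} : Set α)) (hlm : l ≠ m) : ∃ n, ({l, m, n} : Set α) = {a, b, c} := by
  simp only [Set.mem_insert_iff, Set.mem_singleton_iff] at hl hm
  rcases hl with rfl | rfl | rfl <;> rcases hm with rfl | rfl | rfl <;>
    first
    | exact absurd rfl hlm
    | exact ⟨_, rfl⟩
    | exact ⟨a, by ext; simp only [Set.mem_insert_iff, Set.mem_singleton_iff]; tauto⟩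
    | exact ⟨b, by ext; simp only [Set.mem_insert_iff, Set.mem_singleton_iff]; tauto⟩
    | exact ⟨c, by ext; simp only [Set.mem_insert_iff, Set.mem_singleton_iff]; tauto⟩

namespace BA

variable {N r s t : ℕ} {l m n n' : Fin 3 → ℕ}

theorem blackSet_ncard (r s t : ℕ) : (blackSet r s t).ncard = 3 :=
  Set.ncard_triple_eq_three_iff.2 ⟨by simp, by simp, by simp⟩

theorem whiteSet_ncard (r s t : ℕ) : (whiteSet r s t).ncard = 3 :=
  Set.ncard_triple_eq_three_iff.2 ⟨by simp, by simp, by simp⟩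

theorem inf_eq_of_mem_blackSet (hlm : l ≠ m) (hl : l ∈ blackSet r s t) (hm : m ∈ blackSet r s t) :
    l ⊓ m = ![r, s, t] := by
  simp only [blackSet, Set.mem_insert_iff, Set.mem_singleton_iff] at hl hm
  rcases hl with rfl | rfl | rfl <;> rcases hm with rfl | rfl | rfl <;>
    first | exact absurd rfl hlm | (ext k; fin_cases k <;> simp)

theorem sup_eq_of_mem_whiteSet (hlm : l ≠ m) (hl : l ∈ whiteSet r s t) (hm : m ∈ whiteSet r s t) :
    l ⊔ m = ![r + 1, s + 1, t + 1] := by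
  simp only [whiteSet, Set.mem_insert_iff, Set.mem_singleton_iff] at hl hm
  rcases hl with rfl | rfl | rfl <;> rcases hm with rfl | rfl | rfl <;>
    first | exact absurd rfl hlm | (ext k; fin_cases k <;> simp)

theorem Adj.symm (h : Adj l m) : Adj m l := by
  obtain ⟨i, j, hij, h⟩ := h
  exact ⟨j, i, hij.symm, fun k => by linarith [h k]⟩

theorem Adj.ne (h : Adj l m) : l ≠ m := by
  rintro rfl
  obtain ⟨i, j, hij, h⟩ := h
  simpa [hij] using h i

theorem Adj.le_add_one (h : Adj l m) (k : Fin 3) : l k ≤ m k + 1 := by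
  obtain ⟨i, j, -, h⟩ := h
  have := h k
  split_ifs at this <;> omega

theorem blackSet_subset_delta (r s t : ℕ) : blackSet r s t ⊆ Delta (r + s + t + 1) := by
  rintro v (rfl | rfl | rfl) <;>
    simp only [Delta, Set.mem_ofPred_eq, Matrix.cons_val_zero, Matrix.cons_val_one,
      Matrix.cons_val] <;>
    omega

theorem mem_blackSet_inf_of_adj (hl : l ∈ Delta N) (hm : m ∈ Delta N) (h : Adj l m) :
    l ∈ blackSet ((l ⊓ m) 0) ((l ⊓ m) 1) ((l ⊓ m) 2) := by
  have hne : l 0 ≠ m 0 ∨ l 1 ≠ m 1 ∨ l 2 ≠ m 2 := by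
    by_contra! heq
    exact h.ne (funext fun k => by fin_cases k <;> simp [heq])
  have := h.le_add_one 0; have := h.le_add_one 1; have := h.le_add_one 2
  have := h.symm.le_add_one 0; have := h.symm.le_add_one 1; have := h.symm.le_add_one 2
  simp only [Delta, Set.mem_ofPred_eq] at hl hm
  simp only [blackSet, Set.mem_insert_iff, Set.mem_singleton_iff, funext_iff, Fin.forall_fin_succ,
    IsEmpty.forall_iff, Pi.inf_apply, Matrix.cons_val_zero, Matrix.cons_val_succ,
    Fin.succ_zero_eq_one, Fin.succ_one_eq_two, Matrix.cons_val_fin_one, and_true]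
  omega

theorem exists_isBlack_of_adj (hl : l ∈ Delta N) (hm : m ∈ Delta N) (h : Adj l m) :
    ∃ n, IsBlack N {l, m, n} := by
  have hlb := mem_blackSet_inf_of_adj hl hm h
  have hmb : m ∈ blackSet ((l ⊓ m) 0) ((l ⊓ m) 1) ((l ⊓ m) 2) :=
    inf_comm l m ▸ mem_blackSet_inf_of_adj hm hl h.symm
  obtain ⟨n, hn⟩ := Set.exists_insert_insert_eq hlb hmb h.ne
  exact ⟨n, _, _, _, (blackSet_subset_delta _ _ _ hlb).symm.trans hl, hn⟩

theorem IsBlack.third_eq (h : IsBlack N {l, m, n}) (h' : IsBlack N {l, m, n'}) : n = n' := by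
  obtain ⟨r, s, t, -, hS⟩ := h
  obtain ⟨r', s', t', -, hS'⟩ := h'
  obtain ⟨hlm, hln, hmn⟩ := Set.ncard_triple_eq_three_iff.1 (hS ▸ blackSet_ncard r s t)
  have hbase : ![r, s, t] = ![r', s', t'] := by
    rw [← inf_eq_of_mem_blackSet hlm (hS ▸ Set.mem_insert l _) (hS ▸ by simp),
      inf_eq_of_mem_blackSet hlm (hS' ▸ Set.mem_insert l _) (hS' ▸ by simp)]
  simp only [Matrix.vecCons_inj, and_true] at hbase
  obtain ⟨rfl, rfl, rfl⟩ := hbase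
  exact Set.eq_of_insert_insert_eq (hS.trans hS'.symm) hln.symm hmn.symm

theorem IsWhite.third_eq (h : IsWhite N {l, m, n}) (h' : IsWhite N {l, m, n'}) : n = n' := by
  obtain ⟨r, s, t, -, hS⟩ := h
  obtain ⟨r', s', t', -, hS'⟩ := h'
  obtain ⟨hlm, hln, hmn⟩ := Set.ncard_triple_eq_three_iff.1 (hS ▸ whiteSet_ncard r s t)
  have hapex : ![r + 1, s + 1, t + 1] = ![r' + 1, s' + 1, t' + 1] := by
    rw [← sup_eq_of_mem_whiteSet hlm (hS ▸ Set.mem_insert l _) (hS ▸ by simp),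
      sup_eq_of_mem_whiteSet hlm (hS' ▸ Set.mem_insert l _) (hS' ▸ by simp)]
  simp only [Matrix.vecCons_inj, add_left_inj, and_true] at hapex
  obtain ⟨rfl, rfl, rfl⟩ := hapex
  exact Set.eq_of_insert_insert_eq (hS.trans hS'.symm) hln.symm hmn.symm

end BA

/-- Each edge of `Δ_N` is contained in a unique black 3-clique and in at most
one white 3-clique. -/
theorem stmt6 (N : ℕ) (l m : Fin 3 → ℕ)
    (hl : l ∈ BA.Delta N) (hm : m ∈ BA.Delta N) (hadj : BA.Adj l m) :
    (∃! n : Fin 3 → ℕ, BA.IsBlack N {l, m, n}) ∧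
      (∀ n n' : Fin 3 → ℕ, BA.IsWhite N {l, m, n} → BA.IsWhite N {l, m, n'} →
        n = n') := by
  obtain ⟨n, hn⟩ := BA.exists_isBlack_of_adj hl hm hadj
  exact ⟨⟨n, hn, fun _ hn' => hn'.third_eq hn⟩, fun _ _ => BA.IsWhite.third_eq⟩
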